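/- arXiv:2003.06242 — 2 statements merged into one kernel-verified Lean document; each statement's English description precedes it below -/
import Mathlib

section
/- Let κ ∈ ℝ, let a < b be reals, and let 0 < θ₀ < b − a. Suppose u : [a,b] → ℝ satisfies the κ-concavity inequality for all pairs x, y ∈ [a,b] with 0 < y − x < θ₀ and all t ∈ [0,1], i.e. u((1−t)x + t y) ≥ (sin_κ((1−t)(y−x))/sin_κ(y−x))·u(x) + (sin_κ(t(y−x))/sin_κ(y−x))·u(y). Then u satisfies the same inequality for all pairs x, y ∈ [a,b] with 0 < y − x (and (y−x)·√κ < π when κ > 0) and all t ∈ [0,1]. -/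
open Real Set

/-- The generalized sine function `sin_κ`. -/
noncomputable def sinK (κ x : ℝ) : ℝ :=
  if κ < 0 then Real.sinh (Real.sqrt (-κ) * x) / Real.sqrt (-κ)
  else if κ = 0 then x
  else Real.sin (Real.sqrt κ * x) / Real.sqrt κ

/-- `u` satisfies the κ-concavity inequality (`u'' + κ u ≤ 0`) on the set `s`. -/
def KConcIneqOn (κ : ℝ) (u : ℝ → ℝ) (s : Set ℝ) : Prop :=
  ∀ x ∈ s, ∀ y ∈ s, 0 < y - x → (0 < κ → (y - x) * Real.sqrt κ < Real.pi) →
    ∀ t ∈ Set.Icc (0:ℝ) 1,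
      u ((1 - t) * x + t * y) ≥
        (sinK κ ((1 - t) * (y - x)) / sinK κ (y - x)) * u x +
        (sinK κ (t * (y - x)) / sinK κ (y - x)) * u y

/-!
Clearing the positive denominator `sin_κ (y - x)`, the inequality at the point `m` of `[x, y]`
reads `sin_κ (y - m) u(x) + sin_κ (m - x) u(y) ≤ sin_κ (y - x) u(m)`. For `x < p < q < y`, the
Ptolemy identity `sin_κ b sin_κ (a + b + c) + sin_κ a sin_κ c = sin_κ (a + b) sin_κ (b + c)` turns
the inequalities for `(x, p, q)` and `(p, q, y)` into those for `(x, p, y)` and `(x, q, y)`.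
Let `0 < δ ≤ L / 3`. Gluing at the point at distance `δ` from `m` on the side of the longer arm, a
triple `x < m < y` of length `< L + δ` whose arms are at least `δ` comes from two triples of length
`< L`; a triple with an arm shorter than `δ` is glued from a triple of length `< 2δ` and one of the
former kind. Hence the admissible length grows by `δ` at each step, without bound.
-/

namespace Real

theorem sin_ptolemy (a b c : ℝ) :
    sin b * sin (a + b + c) + sin a * sin c = sin (a + b) * sin (b + c) := by
  simp only [sin_add, cos_add]
  linear_combination (-(sin a * sin c)) * sin_sq_add_cos_sq b

theorem sinh_ptolemy (a b c : ℝ) :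
    sinh b * sinh (a + b + c) + sinh a * sinh c = sinh (a + b) * sinh (b + c) := by
  simp only [sinh_add, cosh_add]
  linear_combination (-(sinh a * sinh c)) * cosh_sq b

end Real

theorem sinK_ptolemy (κ a b c : ℝ) :
    sinK κ b * sinK κ (a + b + c) + sinK κ a * sinK κ c = sinK κ (a + b) * sinK κ (b + c) := by
  unfold sinK
  split_ifs with hneg hzero
  · have hk : √(-κ) ≠ 0 := (sqrt_pos.2 (neg_pos.2 hneg)).ne'
    have := sinh_ptolemy (√(-κ) * a) (√(-κ) * b) (√(-κ) * c)
    simp only [← mul_add] at this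
    field_simp
    linear_combination this
  · ring
  · have hk : √κ ≠ 0 := (sqrt_pos.2 (lt_of_le_of_ne (not_lt.1 hneg) (Ne.symm hzero))).ne'
    have := sin_ptolemy (√κ * a) (√κ * b) (√κ * c)
    simp only [← mul_add] at this
    field_simp
    linear_combination this

theorem sinK_zero (κ : ℝ) : sinK κ 0 = 0 := by
  unfold sinK; split_ifs <;> simp

theorem sinK_pos {κ ℓ : ℝ} (hℓ : 0 < ℓ) (hang : 0 < κ → ℓ * √κ < π) : 0 < sinK κ ℓ := by
  unfold sinK
  split_ifs with hneg hzero
  · have hk : 0 < √(-κ) := sqrt_pos.2 (neg_pos.2 hneg)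
    exact div_pos (sinh_pos_iff.2 (mul_pos hk hℓ)) hk
  · exact hℓ
  · have hκ : 0 < κ := lt_of_le_of_ne (not_lt.1 hneg) (Ne.symm hzero)
    have hk : 0 < √κ := sqrt_pos.2 hκ
    exact div_pos (sin_pos_of_pos_of_lt_pi (mul_pos hk hℓ) (mul_comm ℓ √κ ▸ hang hκ)) hk

theorem mul_sqrt_lt_pi_of_le {κ ℓ ℓ' : ℝ} (hang : 0 < κ → ℓ * √κ < π) (hle : ℓ' ≤ ℓ) :
    0 < κ → ℓ' * √κ < π :=
  fun hκ => (mul_le_mul_of_nonneg_right hle (sqrt_nonneg κ)).trans_lt (hang hκ)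

def KConcTriple (κ : ℝ) (u : ℝ → ℝ) (x m y : ℝ) : Prop :=
  sinK κ (y - m) * u x + sinK κ (m - x) * u y ≤ sinK κ (y - x) * u m

namespace KConcTriple

variable {κ : ℝ} {u : ℝ → ℝ} {x p q y : ℝ}

theorem left : KConcTriple κ u x x y := by
  simp [KConcTriple, sinK_zero]

theorem right : KConcTriple κ u x y y := by
  simp [KConcTriple, sinK_zero]

theorem glue (hxp : x < p) (hpq : p < q) (hqy : q < y) (hang : 0 < κ → (y - x) * √κ < π)
    (h₁ : KConcTriple κ u x p q) (h₂ : KConcTriple κ u p q y) :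
    KConcTriple κ u x p y ∧ KConcTriple κ u x q y := by
  have pos : ∀ {a b : ℝ}, x ≤ a → a < b → b ≤ y → 0 < sinK κ (b - a) := fun ha hab hb =>
    sinK_pos (by linarith) (mul_sqrt_lt_pi_of_le hang (by linarith))
  have hpx := pos le_rfl hxp (by linarith)
  have hqp := pos hxp.le hpq hqy.le
  have hyp := pos hxp.le (hpq.trans hqy) le_rfl
  have hqx := pos le_rfl (hxp.trans hpq) hqy.le
  have hyq := pos (hxp.trans hpq).le hqy le_rfl
  have ptolemy := sinK_ptolemy κ (p - x) (q - p) (y - q)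
  rw [show p - x + (q - p) + (y - q) = y - x by ring, show p - x + (q - p) = q - x by ring,
    show q - p + (y - q) = y - p by ring] at ptolemy
  unfold KConcTriple at *
  constructor
  · refine le_of_mul_le_mul_left ?_ hqp
    linear_combination mul_le_mul_of_nonneg_left h₁ hyp.le + mul_le_mul_of_nonneg_left h₂ hpx.le
      - u p * ptolemy
  · refine le_of_mul_le_mul_left ?_ hqp
    linear_combination mul_le_mul_of_nonneg_left h₁ hyq.le + mul_le_mul_of_nonneg_left h₂ hqx.le
      - u q * ptolemy

end KConcTriple

def KConcUpTo (κ : ℝ) (u : ℝ → ℝ) (s : Set ℝ) (L : ℝ) : Prop :=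
  ∀ x ∈ s, ∀ y ∈ s, ∀ m, x < m → m < y → y - x < L → (0 < κ → (y - x) * √κ < π) →
    KConcTriple κ u x m y

namespace KConcUpTo

variable {κ : ℝ} {u : ℝ → ℝ} {s : Set ℝ} {L δ : ℝ}

theorem of_subsegment (hs : s.OrdConnected) (h : KConcUpTo κ u s L) {x y x' m y' : ℝ}
    (hx : x ∈ s) (hy : y ∈ s) (hang : 0 < κ → (y - x) * √κ < π) (hxx' : x ≤ x') (hx'm : x' < m)
    (hmy' : m < y') (hy'y : y' ≤ y) (hℓ : y' - x' < L) : KConcTriple κ u x' m y' :=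
  h x' (hs.out hx hy ⟨hxx', by linarith⟩) y' (hs.out hx hy ⟨by linarith, hy'y⟩) m hx'm hmy' hℓ
    (mul_sqrt_lt_pi_of_le hang (by linarith))

theorem of_le_arms (hs : s.OrdConnected) (hδ : 0 < δ) (hL : 3 * δ ≤ L)
    (h : KConcUpTo κ u s L) {x m y : ℝ} (hx : x ∈ s) (hy : y ∈ s) (hxm : δ ≤ m - x)
    (hmy : δ ≤ y - m) (hℓ₀ : 2 * δ < y - x) (hℓ : y - x < L + δ)
    (hang : 0 < κ → (y - x) * √κ < π) : KConcTriple κ u x m y := by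
  rcases le_total (m - x) (y - m) with hle | hle
  · refine (KConcTriple.glue (q := m + δ) ?_ ?_ ?_ hang ?_ ?_).1 <;>
      first | linarith | apply h.of_subsegment hs hx hy hang <;> linarith
  · refine (KConcTriple.glue (p := m - δ) ?_ ?_ ?_ hang ?_ ?_).2 <;>
      first | linarith | apply h.of_subsegment hs hx hy hang <;> linarith

theorem add (hs : s.OrdConnected) (hδ : 0 < δ) (hL : 3 * δ ≤ L) (h : KConcUpTo κ u s L) :
    KConcUpTo κ u s (L + δ) := by
  intro x hx y hy m hxm hmy hℓ hang
  have hm : m ∈ s := hs.out hx hy ⟨hxm.le, hmy.le⟩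
  rcases lt_or_ge (y - x) L with hshort | hlong
  · exact h x hx y hy m hxm hmy hshort hang
  rcases lt_or_ge (m - x) δ with hleft | hleft
  · refine (KConcTriple.glue (q := m + δ) hxm ?_ ?_ hang ?_ ?_).1
    any_goals linarith
    · apply h.of_subsegment hs hx hy hang <;> linarith
    · apply of_le_arms hs hδ hL h hm hy <;>
        first | linarith | exact mul_sqrt_lt_pi_of_le hang (by linarith)
  rcases lt_or_ge (y - m) δ with hright | hright
  · refine (KConcTriple.glue (p := m - δ) ?_ ?_ hmy hang ?_ ?_).2
    any_goals linarith
    · apply of_le_arms hs hδ hL h hx hm <;>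
        first | linarith | exact mul_sqrt_lt_pi_of_le hang (by linarith)
    · apply h.of_subsegment hs hx hy hang <;> linarith
  exact of_le_arms hs hδ hL h hx hy hleft hright (by linarith) hℓ hang

theorem of_pos (hs : s.OrdConnected) (hL : 0 < L) (h : KConcUpTo κ u s L) (L' : ℝ) :
    KConcUpTo κ u s L' := by
  have hn : ∀ n : ℕ, KConcUpTo κ u s (L + n * (L / 3)) := by
    intro n
    induction n with
    | zero => simpa using h
    | succ n ih =>
      rw [Nat.cast_succ, add_one_mul, ← add_assoc]
      exact ih.add hs (by positivity) (by nlinarith [n.cast_nonneg (α := ℝ)])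
  obtain ⟨n, hn'⟩ := exists_nat_gt (L' / (L / 3))
  intro x hx y hy m hxm hmy hℓ hang
  refine hn n x hx y hy m hxm hmy ?_ hang
  rw [div_lt_iff₀ (by positivity)] at hn'
  linarith

end KConcUpTo

theorem kConcTriple_iff {κ : ℝ} {u : ℝ → ℝ} {x y : ℝ} (hS : 0 < sinK κ (y - x)) (t : ℝ) :
    KConcTriple κ u x ((1 - t) * x + t * y) y ↔
      u ((1 - t) * x + t * y) ≥
        (sinK κ ((1 - t) * (y - x)) / sinK κ (y - x)) * u x +
        (sinK κ (t * (y - x)) / sinK κ (y - x)) * u y := by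
  rw [KConcTriple, ge_iff_le, div_mul_eq_mul_div, div_mul_eq_mul_div, ← add_div,
    div_le_iff₀ hS, mul_comm _ (sinK κ _)]
  ring_nf

theorem kConcIneqOn_of_forall_kConcUpTo {κ : ℝ} {u : ℝ → ℝ} {s : Set ℝ}
    (h : ∀ L, KConcUpTo κ u s L) : KConcIneqOn κ u s := by
  intro x hx y hy hxy hang t ht
  rw [← kConcTriple_iff (sinK_pos hxy hang)]
  rcases ht.1.eq_or_lt with rfl | ht₀
  · simpa using KConcTriple.left
  rcases ht.2.eq_or_lt with rfl | ht₁
  · simpa using KConcTriple.right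
  exact h (y - x + 1) x hx y hy _ (by nlinarith) (by nlinarith) (by linarith) hang

theorem kConcIneq_of_local_general (κ a b θ₀ : ℝ)
    (hθ₀ : 0 < θ₀) (u : ℝ → ℝ)
    (hloc : ∀ x ∈ Set.Icc a b, ∀ y ∈ Set.Icc a b, 0 < y - x → y - x < θ₀ →
      (0 < κ → (y - x) * Real.sqrt κ < Real.pi) →
      ∀ t ∈ Set.Icc (0:ℝ) 1,
        u ((1 - t) * x + t * y) ≥
          (sinK κ ((1 - t) * (y - x)) / sinK κ (y - x)) * u x +
          (sinK κ (t * (y - x)) / sinK κ (y - x)) * u y) :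
    KConcIneqOn κ u (Set.Icc a b) := by
  have hθ : KConcUpTo κ u (Icc a b) θ₀ := by
    intro x hx y hy m hxm hmy hℓ hang
    have hxy : 0 < y - x := by linarith
    have hm : (1 - (m - x) / (y - x)) * x + (m - x) / (y - x) * y = m := by
      field_simp; ring
    have ht : (m - x) / (y - x) ∈ Icc (0 : ℝ) 1 :=
      ⟨div_nonneg (by linarith) hxy.le, (div_le_one hxy).2 (by linarith)⟩
    simpa only [hm] using (kConcTriple_iff (sinK_pos hxy hang) _).2
      (hloc x hx y hy hxy hℓ hang _ ht)
  exact kConcIneqOn_of_forall_kConcUpTo (hθ.of_pos ordConnected_Icc hθ₀)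

/-- Local-to-global: if `u` satisfies the κ-concavity inequality for all pairs of
points in `[a,b]` at distance less than `θ₀`, then it satisfies it for all pairs. -/
theorem kConcIneq_of_local (κ a b θ₀ : ℝ) (hab : a < b)
    (hθ₀ : 0 < θ₀) (hθ₀' : θ₀ < b - a) (u : ℝ → ℝ)
    (hloc : ∀ x ∈ Set.Icc a b, ∀ y ∈ Set.Icc a b, 0 < y - x → y - x < θ₀ →
      (0 < κ → (y - x) * Real.sqrt κ < Real.pi) →
      ∀ t ∈ Set.Icc (0:ℝ) 1,
        u ((1 - t) * x + t * y) ≥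
          (sinK κ ((1 - t) * (y - x)) / sinK κ (y - x)) * u x +
          (sinK κ (t * (y - x)) / sinK κ (y - x)) * u y) :
    KConcIneqOn κ u (Set.Icc a b) :=
  kConcIneq_of_local_general κ a b θ₀ hθ₀ u hloc
end

section
/- Let K ∈ ℝ, let N > 1 be real, and let a < b be reals with (b−a)·√(max(K,0)/(N−1)) < π. Let h : [a,b] → [0,∞) be Borel measurable and suppose that h^{1/(N−1)} satisfies the K/(N−1)-concavity inequality on [a,b]: for all x, y ∈ [a,b] with 0 < y − x and all t ∈ [0,1], h((1−t)x + ty)^{1/(N−1)} ≥ σ^{(1−t)}(y−x)·h(x)^{1/(N−1)} + σ^{(t)}(y−x)·h(y)^{1/(N−1)}, where σ^{(t)}(θ) = sin_{K/(N−1)}(tθ)/sin_{K/(N−1)}(θ). Then for every Borel set J ⊆ [a,b) and every t ∈ [0,1): ∫_{(1−t)J + t b} h(x) dx ≥ (1−t) · ∫_J ( sin_{K/(N−1)}((1−t)(b−x)) / sin_{K/(N−1)}(b−x) )^{N−1} · h(x) dx, where (1−t)J + t b = {(1−t)x + t b : x ∈ J} and the integrals are with respect to Lebesgue measure. -/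
/-!
Taking `y = b` in the concavity inequality and discarding the nonnegative contribution of `h b`
gives, with `κ = K/(N-1)` and `σ(x) = sin_κ((1-t)(b-x)) / sin_κ(b-x)`, the pointwise bound
`σ(x)^(N-1) h x ≤ h ((1-t) x + t b)`; the claim follows by the affine change of variables
`x ↦ (1-t) x + t b`, whose Jacobian is `1 - t`. The comparison of integrals needs `h` integrable
on `[a, b]`: comparing with the midpoint, the same inequality bounds `h^(1/(N-1))` there, because
`sin_κ` is positive on `(0, b - a]` when `√κ (b - a) < π`.
-/

open Real Set MeasureTheory

theorem continuous_sinK (κ : ℝ) : Continuous (sinK κ) := by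
  unfold sinK
  split_ifs <;> fun_prop

-- For `κ ≤ 0` the bound on `√κ * s` is automatic, since then `√κ = 0`.
theorem sinK_nonneg {κ s : ℝ} (hs : 0 ≤ s) (hsπ : √κ * s ≤ π) : 0 ≤ sinK κ s := by
  unfold sinK
  split_ifs
  · exact div_nonneg (sinh_nonneg_iff.2 (by positivity)) (sqrt_nonneg _)
  · exact hs
  · exact div_nonneg (sin_nonneg_of_nonneg_of_le_pi (by positivity) hsπ) (sqrt_nonneg _)

theorem sinK_pos_s10 {κ s : ℝ} (hs : 0 < s) (hsπ : √κ * s < π) : 0 < sinK κ s := by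
  unfold sinK
  split_ifs with hneg hzero
  · have : 0 < √(-κ) := sqrt_pos.2 (neg_pos.2 hneg)
    exact div_pos (sinh_pos_iff.2 (by positivity)) this
  · exact hs
  · have : 0 < √κ := sqrt_pos.2 (lt_of_le_of_ne (not_lt.1 hneg) (Ne.symm hzero))
    exact div_pos (sin_pos_of_pos_of_lt_pi (by positivity) hsπ) this

theorem sinK_mul_div_sinK_nonneg {κ ℓ L t : ℝ} (hℓ : 0 ≤ ℓ) (hℓL : ℓ ≤ L) (hπ : √κ * L ≤ π)
    (ht : t ∈ Icc (0 : ℝ) 1) : 0 ≤ sinK κ ((1 - t) * ℓ) / sinK κ ℓ := by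
  have hπℓ : √κ * ℓ ≤ π := (mul_le_mul_of_nonneg_left hℓL (sqrt_nonneg κ)).trans hπ
  have htℓ : (1 - t) * ℓ ≤ ℓ := mul_le_of_le_one_left hℓ (by linarith [ht.1])
  exact div_nonneg (sinK_nonneg (mul_nonneg (by linarith [ht.2]) hℓ)
    ((mul_le_mul_of_nonneg_left htℓ (sqrt_nonneg κ)).trans hπℓ)) (sinK_nonneg hℓ hπℓ)

def IsSinKConcaveOn (κ : ℝ) (s : Set ℝ) (g : ℝ → ℝ) : Prop :=
  ∀ x ∈ s, ∀ y ∈ s, 0 < y - x → ∀ t ∈ Icc (0 : ℝ) 1,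
    g ((1 - t) * x + t * y) ≥
      sinK κ ((1 - t) * (y - x)) / sinK κ (y - x) * g x +
        sinK κ (t * (y - x)) / sinK κ (y - x) * g y

namespace IsSinKConcaveOn

variable {κ : ℝ} {s : Set ℝ} {g : ℝ → ℝ} {x y w : ℝ}

theorem weighted_add_le (hg : IsSinKConcaveOn κ s g) (hx : x ∈ s) (hy : y ∈ s) (hxy : x < y)
    (hw : w ∈ Icc x y) :
    sinK κ (y - w) / sinK κ (y - x) * g x + sinK κ (w - x) / sinK κ (y - x) * g y ≤ g w := by
  have hyx : 0 < y - x := sub_pos.2 hxy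
  have ht : (w - x) / (y - x) ∈ Icc (0 : ℝ) 1 :=
    ⟨div_nonneg (by linarith [hw.1]) hyx.le, (div_le_one hyx).2 (by linarith [hw.2])⟩
  have hne : y - x ≠ 0 := hyx.ne'
  have hpt : (1 - (w - x) / (y - x)) * x + (w - x) / (y - x) * y = w := by field_simp; ring
  have hleft : (1 - (w - x) / (y - x)) * (y - x) = y - w := by field_simp; ring
  have hright : (w - x) / (y - x) * (y - x) = w - x := div_mul_cancel₀ _ hne
  simpa only [hpt, hleft, hright] using hg x hx y hy hyx _ ht

theorem left_mul_le (hg : IsSinKConcaveOn κ s g) (hx : x ∈ s) (hy : y ∈ s) (hxy : x < y)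
    (hw : w ∈ Icc x y) (hπ : √κ * (y - x) ≤ π) (hgy : 0 ≤ g y) :
    sinK κ (y - w) / sinK κ (y - x) * g x ≤ g w := by
  have hwx : √κ * (w - x) ≤ π :=
    (mul_le_mul_of_nonneg_left (by linarith [hw.2]) (sqrt_nonneg κ)).trans hπ
  have : 0 ≤ sinK κ (w - x) / sinK κ (y - x) * g y :=
    mul_nonneg (div_nonneg (sinK_nonneg (by linarith [hw.1]) hwx)
      (sinK_nonneg (by linarith) hπ)) hgy
  linarith [hg.weighted_add_le hx hy hxy hw]

theorem right_mul_le (hg : IsSinKConcaveOn κ s g) (hx : x ∈ s) (hy : y ∈ s) (hxy : x < y)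
    (hw : w ∈ Icc x y) (hπ : √κ * (y - x) ≤ π) (hgx : 0 ≤ g x) :
    sinK κ (w - x) / sinK κ (y - x) * g y ≤ g w := by
  have hyw : √κ * (y - w) ≤ π :=
    (mul_le_mul_of_nonneg_left (by linarith [hw.1]) (sqrt_nonneg κ)).trans hπ
  have : 0 ≤ sinK κ (y - w) / sinK κ (y - x) * g x :=
    mul_nonneg (div_nonneg (sinK_nonneg (by linarith [hw.2]) hyw)
      (sinK_nonneg (by linarith) hπ)) hgx
  linarith [hg.weighted_add_le hx hy hxy hw]

theorem bddAbove_image_Icc {a b : ℝ} (hg : IsSinKConcaveOn κ (Icc a b) g)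
    (hg0 : ∀ z ∈ Icc a b, 0 ≤ g z) (hab : a < b) (hπ : √κ * (b - a) < π) :
    BddAbove (g '' Icc a b) := by
  have hπ' : ∀ ℓ ≤ b - a, √κ * ℓ < π := fun ℓ hℓ =>
    (mul_le_mul_of_nonneg_left hℓ (sqrt_nonneg κ)).trans_lt hπ
  obtain ⟨S, hS⟩ := (isCompact_Icc (a := 0) (b := b - a)).bddAbove_image
    (continuous_sinK κ).continuousOn
  set m := (a + b) / 2 with hm_def
  have hm : m ∈ Icc a b := ⟨by linarith, by linarith⟩
  have hhalf : 0 < sinK κ ((b - a) / 2) := sinK_pos_s10 (by linarith) (hπ' _ (by linarith))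
  have key : ∀ z ∈ Icc a b,
      ∃ ℓ ∈ Ioc 0 (b - a), sinK κ ((b - a) / 2) / sinK κ ℓ * g z ≤ g m := by
    intro z hz
    rcases lt_or_ge z m with hzm | hzm
    · refine ⟨b - z, ⟨by linarith, by linarith [hz.1]⟩, ?_⟩
      have := hg.left_mul_le hz ⟨hab.le, le_rfl⟩ (hzm.trans_le hm.2) ⟨hzm.le, hm.2⟩
        (hπ' _ (by linarith [hz.1])).le (hg0 b ⟨hab.le, le_rfl⟩)
      rwa [show b - m = (b - a) / 2 by ring] at this
    · refine ⟨z - a, ⟨by linarith [hm.1], by linarith [hz.2]⟩, ?_⟩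
      have := hg.right_mul_le ⟨le_rfl, hab.le⟩ hz (by linarith) ⟨hm.1, hzm⟩
        (hπ' _ (by linarith [hz.2])).le (hg0 a ⟨le_rfl, hab.le⟩)
      rwa [show m - a = (b - a) / 2 by ring] at this
  refine ⟨g m * S / sinK κ ((b - a) / 2), ?_⟩
  rintro _ ⟨z, hz, rfl⟩
  obtain ⟨ℓ, hℓ, hle⟩ := key z hz
  have hℓpos : 0 < sinK κ ℓ := sinK_pos_s10 hℓ.1 (hπ' ℓ hℓ.2)
  rw [div_mul_eq_mul_div, div_le_iff₀ hℓpos] at hle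
  calc g z ≤ g m * sinK κ ℓ / sinK κ ((b - a) / 2) := by rw [le_div_iff₀ hhalf]; linarith
    _ ≤ g m * S / sinK κ ((b - a) / 2) := by
      gcongr
      exacts [hg0 m hm, hS ⟨ℓ, Ioc_subset_Icc_self hℓ, rfl⟩]

end IsSinKConcaveOn

theorem rpow_mul_le_of_mul_rpow_one_div_le {p c u v : ℝ} (hp : 0 < p) (hc : 0 ≤ c)
    (hu : 0 ≤ u) (hv : 0 ≤ v) (h : c * u ^ (1 / p) ≤ v ^ (1 / p)) : c ^ p * u ≤ v := by
  have := rpow_le_rpow (by positivity) h hp.le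
  rwa [mul_rpow hc (by positivity), one_div, rpow_inv_rpow hu hp.ne',
    rpow_inv_rpow hv hp.ne'] at this

theorem integrableOn_Icc_of_isSinKConcaveOn_rpow {κ p a b : ℝ} {h : ℝ → ℝ} (hp : 0 < p)
    (hmeas : AEStronglyMeasurable h (volume.restrict (Icc a b)))
    (hnonneg : ∀ x ∈ Icc a b, 0 ≤ h x)
    (hconc : IsSinKConcaveOn κ (Icc a b) fun x => h x ^ (1 / p))
    (hab : a < b) (hπ : √κ * (b - a) < π) : IntegrableOn h (Icc a b) := by
  obtain ⟨C, hC⟩ :=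
    hconc.bddAbove_image_Icc (fun z hz => rpow_nonneg (hnonneg z hz) _) hab hπ
  refine Integrable.of_bound hmeas (C ^ p) ?_
  filter_upwards [ae_restrict_mem measurableSet_Icc] with z hz
  have hzC : h z ^ p⁻¹ ≤ C := by simpa only [one_div] using hC ⟨z, hz, rfl⟩
  rw [norm_of_nonneg (hnonneg z hz)]
  exact (rpow_inv_le_iff_of_pos (hnonneg z hz) ((rpow_nonneg (hnonneg z hz) _).trans hzC) hp).1
    hzC

section AffineImage

variable {E : Type*} [NormedAddCommGroup E] [NormedSpace ℝ E] {c : ℝ} {s : Set ℝ}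

theorem integral_image_affine (hc : c ≠ 0) (d : ℝ) (hs : MeasurableSet s) (f : ℝ → E) :
    ∫ x in (fun x => c * x + d) '' s, f x = ∫ x in s, |c| • f (c * x + d) :=
  integral_image_eq_integral_abs_deriv_smul hs
    (fun x _ => by simpa using (((hasDerivAt_id x).const_mul c).add_const d).hasDerivWithinAt)
    (fun _ _ _ _ hxy => mul_left_cancel₀ hc (add_right_cancel hxy)) f

theorem integrableOn_image_affine_iff (hc : c ≠ 0) (d : ℝ) (hs : MeasurableSet s) (f : ℝ → E) :
    IntegrableOn f ((fun x => c * x + d) '' s) ↔ IntegrableOn (fun x => |c| • f (c * x + d)) s :=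
  integrableOn_image_iff_integrableOn_abs_deriv_smul hs
    (fun x _ => by simpa using (((hasDerivAt_id x).const_mul c).add_const d).hasDerivWithinAt)
    (fun _ _ _ _ hxy => mul_left_cancel₀ hc (add_right_cancel hxy)) f

end AffineImage

theorem IsSinKConcaveOn.sinK_ratio_rpow_mul_le {κ p a b x t : ℝ} {h : ℝ → ℝ} (hp : 0 < p)
    (hconc : IsSinKConcaveOn κ (Icc a b) fun x => h x ^ (1 / p))
    (hnonneg : ∀ x ∈ Icc a b, 0 ≤ h x) (hπ : √κ * (b - a) ≤ π) (hx : x ∈ Ico a b)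
    (ht : t ∈ Icc (0 : ℝ) 1) :
    (sinK κ ((1 - t) * (b - x)) / sinK κ (b - x)) ^ p * h x ≤ h ((1 - t) * x + t * b) := by
  have hab : a < b := hx.1.trans_lt hx.2
  have hxab : x ∈ Icc a b := Ico_subset_Icc_self hx
  have hw : (1 - t) * x + t * b ∈ Icc x b :=
    ⟨by nlinarith [ht.1, hx.2], by nlinarith [ht.2, hx.2]⟩
  have hπx : √κ * (b - x) ≤ π :=
    (mul_le_mul_of_nonneg_left (by linarith [hx.1]) (sqrt_nonneg κ)).trans hπ
  have := hconc.left_mul_le hxab ⟨hab.le, le_rfl⟩ hx.2 hw hπx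
    (rpow_nonneg (hnonneg b ⟨hab.le, le_rfl⟩) _)
  rw [show b - ((1 - t) * x + t * b) = (1 - t) * (b - x) by ring] at this
  exact rpow_mul_le_of_mul_rpow_one_div_le hp
    (sinK_mul_div_sinK_nonneg (by linarith [hx.2]) le_rfl hπx ht) (hnonneg x hxab)
    (hnonneg _ ⟨hx.1.trans hw.1, hw.2⟩) this

/-- One-dimensional Brunn–Minkowski-type contraction estimate towards the endpoint `b`
for a `CD(K,N)` density `h` on `[a,b]`. -/
theorem density_contraction_estimate (K N a b : ℝ) (hN : 1 < N) (hab : a < b)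
    (hπ : (b - a) * Real.sqrt (max K 0 / (N - 1)) < Real.pi)
    (h : ℝ → ℝ) (hmeas : Measurable h) (hnonneg : ∀ x ∈ Set.Icc a b, 0 ≤ h x)
    (hconc : ∀ x ∈ Set.Icc a b, ∀ y ∈ Set.Icc a b, 0 < y - x →
      ∀ t ∈ Set.Icc (0:ℝ) 1,
        h ((1 - t) * x + t * y) ^ (1 / (N - 1)) ≥
          (sinK (K / (N - 1)) ((1 - t) * (y - x)) / sinK (K / (N - 1)) (y - x)) *
            h x ^ (1 / (N - 1)) +
          (sinK (K / (N - 1)) (t * (y - x)) / sinK (K / (N - 1)) (y - x)) *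
            h y ^ (1 / (N - 1))) :
    ∀ J : Set ℝ, MeasurableSet J → J ⊆ Set.Ico a b → ∀ t ∈ Set.Ico (0:ℝ) 1,
      ∫ x in (fun x : ℝ => (1 - t) * x + t * b) '' J, h x ≥
        (1 - t) * ∫ x in J,
          (sinK (K / (N - 1)) ((1 - t) * (b - x)) / sinK (K / (N - 1)) (b - x))
            ^ (N - 1) * h x := by
  intro J hJ hJsub t ht
  set κ := K / (N - 1)
  have hN1 : 0 < N - 1 := sub_pos.2 hN
  have h1t : 0 < 1 - t := sub_pos.2 ht.2
  have hconc' : IsSinKConcaveOn κ (Icc a b) fun x => h x ^ (1 / (N - 1)) := hconc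
  have hπκ : √κ * (b - a) < π := by
    rw [mul_comm]
    refine lt_of_le_of_lt ?_ hπ
    gcongr
    exact div_le_div_of_nonneg_right (le_max_left K 0) hN1.le
  have hint : IntegrableOn h (Icc a b) :=
    integrableOn_Icc_of_isSinKConcaveOn_rpow hN1 hmeas.aestronglyMeasurable hnonneg hconc' hab
      hπκ
  have himage : (fun x => (1 - t) * x + t * b) '' J ⊆ Icc a b := by
    rintro _ ⟨x, hx, rfl⟩
    have := hJsub hx
    constructor <;> nlinarith [ht.1, this.1, this.2]
  have hσ (x) (hx : x ∈ J) : 0 ≤ sinK κ ((1 - t) * (b - x)) / sinK κ (b - x) :=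
    sinK_mul_div_sinK_nonneg (by linarith [(hJsub hx).2]) (by linarith [(hJsub hx).1]) hπκ.le
      (Ico_subset_Icc_self ht)
  calc (1 - t) * ∫ x in J, _ = ∫ x in J, (1 - t) *
        ((sinK κ ((1 - t) * (b - x)) / sinK κ (b - x)) ^ (N - 1) * h x) :=
        (integral_const_mul _ _).symm
    _ ≤ ∫ x in J, |1 - t| • h ((1 - t) * x + t * b) := by
      refine setIntegral_mono_of_nonneg (fun x hx => ?_) (fun x hx => ?_)
        ((integrableOn_image_affine_iff h1t.ne' _ hJ h).1 (hint.mono_set himage))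
      · exact mul_nonneg h1t.le (mul_nonneg (rpow_nonneg (hσ x hx) _)
          (hnonneg x (Ico_subset_Icc_self (hJsub hx))))
      · rw [smul_eq_mul, abs_of_pos h1t]
        exact mul_le_mul_of_nonneg_left (hconc'.sinK_ratio_rpow_mul_le hN1 hnonneg hπκ.le
          (hJsub hx) (Ico_subset_Icc_self ht)) h1t.le
    _ = _ := (integral_image_affine h1t.ne' _ hJ h).symm
end
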